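/- arXiv:2107.13681 — 4 statements merged into one kernel-verified Lean document; each statement's English description precedes it below -/
import Mathlib

section
/- Let f : (ℝ≥0)^k → ℝ≥0 be stably computed by a CRC (Λ,R,Σ,Y) and let Ω be an output stable siphon. Then there exists a linear function g : ℝ^k → ℝ such that f(x) = g(x) for every input x ∈ (ℝ≥0)^k whose associated initial state lies in Σ(Ω). -/
open Finset Filter Topology

/-- A chemical reaction network (CRN): a finite set of species indexed by `Fin nS`
and a finite set of reactions indexed by `Fin nR`.  Each reaction `α` is a pair
`(react α, prods α) ∈ ℕ^Λ × ℕ^Λ` of reactant/product stoichiometries with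
nonzero reactant vector. -/
structure CRN where
  nS : ℕ
  nR : ℕ
  react : Fin nR → Fin nS → ℕ
  prods : Fin nR → Fin nS → ℕ
  react_ne_zero : ∀ α, react α ≠ 0

namespace CRN

variable (N : CRN)

/-- The stoichiometry matrix: `M(S,α) = p(S) − r(S)`. -/
def stoich (s : Fin N.nS) (α : Fin N.nR) : ℝ :=
  (N.prods α s : ℝ) - (N.react α s : ℝ)

/-- A state is a vector of nonnegative concentrations. -/
def IsState (c : Fin N.nS → ℝ) : Prop := ∀ s, 0 ≤ c s

/-- `[c]`: the set of species present in `c`. -/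
def present (c : Fin N.nS → ℝ) : Set (Fin N.nS) := {s | 0 < c s}

/-- A reaction `α` is applicable at `c` if `[react α] ⊆ [c]`. -/
def applicable (c : Fin N.nS → ℝ) (α : Fin N.nR) : Prop :=
  ∀ s, 0 < N.react α s → 0 < c s

/-- `c →¹ d`: `d` is straight-line reachable from `c`, i.e. `d = c + M u` for some
nonnegative flux vector `u` whose positive entries correspond to reactions
applicable at `c`. -/
def slReach (c d : Fin N.nS → ℝ) : Prop :=
  N.IsState c ∧ N.IsState d ∧
  ∃ u : Fin N.nR → ℝ, (∀ α, 0 ≤ u α) ∧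
    (∀ α, 0 < u α → N.applicable c α) ∧
    ∀ s, d s = c s + ∑ α, u α * N.stoich s α

/-- `c ⇝^l d`: `d` is `l`-segment reachable from `c`. -/
def segReachN (l : ℕ) (c d : Fin N.nS → ℝ) : Prop :=
  ∃ b : Fin (l + 1) → Fin N.nS → ℝ,
    b 0 = c ∧ b (Fin.last l) = d ∧
    ∀ i : Fin l, N.slReach (b i.castSucc) (b i.succ)

/-- `c ⇝ d`: `d` is segment-reachable from `c`. -/
def segReach (c d : Fin N.nS → ℝ) : Prop := ∃ l, N.segReachN l c d

/-- `P(c)`: the set of species present in some state segment-reachable from `c`. -/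
def producible (c : Fin N.nS → ℝ) : Set (Fin N.nS) :=
  {s | ∃ d, N.segReach c d ∧ 0 < d s}

/-- A siphon: every reaction producing a species of `Ω` has a reactant in `Ω`. -/
def IsSiphon (Ω : Set (Fin N.nS)) : Prop :=
  ∀ α, (∃ s ∈ Ω, 0 < N.prods α s) → ∃ s ∈ Ω, 0 < N.react α s

end CRN
/-- A chemical reaction computer (CRC): a CRN together with `k` distinct input
species `X_1, …, X_k` and an output species `Y` that is not an input species. -/
structure CRC (k : ℕ) extends CRN where
  inputs : Fin k → Fin nS
  out : Fin nS
  inputs_inj : Function.Injective inputs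
  out_not_input : ∀ i, inputs i ≠ out

namespace CRC

variable {k : ℕ} (C : CRC k)

/-- The initial state associated to an input vector `x ∈ (ℝ≥0)^k`:
concentration `x i` of input species `X_i` and `0` of every other species. -/
def inputState (x : Fin k → ℝ) : Fin C.nS → ℝ :=
  fun s => ∑ i, if C.inputs i = s then x i else 0

/-- A state `o` is output stable if no segment-reachable state changes the
concentration of the output species. -/
def outputStable (o : Fin C.nS → ℝ) : Prop :=
  ∀ o', C.toCRN.segReach o o' → o' C.out = o C.out

/-- The CRC stably computes `f : (ℝ≥0)^k → ℝ≥0`. -/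
def stablyComputes (f : (Fin k → ℝ) → ℝ) : Prop :=
  ∀ x : Fin k → ℝ, (∀ i, 0 ≤ x i) →
    ∀ c, C.toCRN.segReach (C.inputState x) c →
      ∃ o, C.toCRN.segReach c o ∧ C.outputStable o ∧ o C.out = f x

end CRC

namespace CRN

variable {N : CRN}

lemma IsState.add {c e : Fin N.nS → ℝ} (hc : N.IsState c) (he : N.IsState e) :
    N.IsState (c + e) := fun s => add_nonneg (hc s) (he s)

lemma IsState.smul {c : Fin N.nS → ℝ} {t : ℝ} (ht : 0 ≤ t) (hc : N.IsState c) :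
    N.IsState (t • c) := fun s => mul_nonneg ht (hc s)

lemma slReach_refl {c : Fin N.nS → ℝ} (hc : N.IsState c) : N.slReach c c :=
  ⟨hc, hc, 0, fun _ => le_rfl, fun α hα => absurd hα (by simp), fun s => by simp⟩

lemma slReach_add {c d e : Fin N.nS → ℝ} (h : N.slReach c d) (he : N.IsState e) :
    N.slReach (c + e) (d + e) := by
  obtain ⟨hc, hd, u, hu0, happ, hsum⟩ := h
  refine ⟨hc.add he, hd.add he, u, hu0, fun α hα s hs => ?_, fun s => ?_⟩
  · exact add_pos_of_pos_of_nonneg (happ α hα s hs) (he s)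
  · simp only [Pi.add_apply, hsum s]; ring

lemma slReach_smul {c d : Fin N.nS → ℝ} {t : ℝ} (ht : 0 ≤ t) (h : N.slReach c d) :
    N.slReach (t • c) (t • d) := by
  obtain ⟨hc, hd, u, hu0, happ, hsum⟩ := h
  refine ⟨hc.smul ht, hd.smul ht, t • u, fun α => mul_nonneg ht (hu0 α),
    fun α hα s hs => ?_, fun s => ?_⟩
  · have ht' : 0 < t := by
      rcases ht.lt_or_eq with h' | h'
      · exact h'
      · exfalso; rw [← h'] at hα; simpa using hα
    have hu : 0 < u α := by
      by_contra hcon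
      have : u α = 0 := le_antisymm (not_lt.mp hcon) (hu0 α)
      simp [this] at hα
    exact mul_pos ht' (happ α hu s hs)
  · simp only [Pi.smul_apply, smul_eq_mul, hsum s, mul_add, Finset.mul_sum]
    congr 1
    exact Finset.sum_congr rfl fun α _ => by ring

lemma segReachN_to_RTG : ∀ {l : ℕ} {c d : Fin N.nS → ℝ},
    N.segReachN l c d → Relation.ReflTransGen N.slReach c d := by
  intro l
  induction l with
  | zero =>
    rintro c d ⟨b, h0, hl, _⟩
    have : c = d := by rw [← h0, ← hl]; rfl
    exact this ▸ Relation.ReflTransGen.refl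
  | succ l ih =>
    rintro c d ⟨b, h0, hl, hstep⟩
    have h1 : N.slReach c (b 1) := by
      have := hstep 0
      rwa [show (0 : Fin (l+1)).castSucc = 0 from rfl, h0,
        show (0 : Fin (l+1)).succ = 1 from rfl] at this
    refine Relation.ReflTransGen.head h1 (ih ⟨fun i => b i.succ, rfl, ?_, fun i => ?_⟩)
    · show b (Fin.last l).succ = d
      rw [Fin.succ_last, hl]
    · show N.slReach (b i.castSucc.succ) (b i.succ.succ)
      have := hstep i.succ
      rwa [← Fin.succ_castSucc] at this
  
lemma RTG_to_segReach {c d : Fin N.nS → ℝ}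
    (h : Relation.ReflTransGen N.slReach c d) : N.segReach c d := by
  induction h with
  | refl => exact ⟨0, fun _ => c, rfl, rfl, fun i => i.elim0⟩
  | @tail m e hcm hme ih =>
    obtain ⟨l, b, h0, hl, hstep⟩ := ih
    refine ⟨l + 1, Fin.snoc b e, ?_, by simp, fun i => ?_⟩
    · rw [show (0 : Fin (l+2)) = Fin.castSucc 0 from rfl, Fin.snoc_castSucc, h0]
    · induction i using Fin.lastCases with
      | last =>
        rw [Fin.snoc_castSucc, Fin.succ_last, Fin.snoc_last, hl]
        exact hme
      | cast j =>
        rw [Fin.snoc_castSucc, Fin.succ_castSucc, Fin.snoc_castSucc]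
        exact hstep j

lemma segReach_iff_RTG {c d : Fin N.nS → ℝ} :
    N.segReach c d ↔ Relation.ReflTransGen N.slReach c d :=
  ⟨fun ⟨_, h⟩ => segReachN_to_RTG h, RTG_to_segReach⟩

lemma segReach_isState {c d : Fin N.nS → ℝ} (h : N.segReach c d) (hc : N.IsState c) :
    N.IsState d := by
  rw [segReach_iff_RTG] at h
  induction h with
  | refl => exact hc
  | tail _ hstep _ => exact hstep.2.1

lemma segReach_add {c d e : Fin N.nS → ℝ} (h : N.segReach c d) (he : N.IsState e) :
    N.segReach (c + e) (d + e) := by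
  rw [segReach_iff_RTG] at h ⊢
  induction h with
  | refl => exact Relation.ReflTransGen.refl
  | tail _ hstep ih => exact ih.tail (slReach_add hstep he)

lemma segReach_smul {c d : Fin N.nS → ℝ} {t : ℝ} (ht : 0 ≤ t) (h : N.segReach c d) :
    N.segReach (t • c) (t • d) := by
  rw [segReach_iff_RTG] at h ⊢
  induction h with
  | refl => exact Relation.ReflTransGen.refl
  | tail _ hstep ih => exact ih.tail (slReach_smul ht hstep)

lemma segReach_add_both {c d c' d' : Fin N.nS → ℝ} (h : N.segReach c d)
    (h' : N.segReach c' d') (hc' : N.IsState c') (hd : N.IsState d) :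
    N.segReach (c + c') (d + d') := by
  rw [segReach_iff_RTG] at h h' ⊢
  refine (segReach_iff_RTG.mp (segReach_add (segReach_iff_RTG.mpr h) hc')).trans ?_
  have := segReach_add (segReach_iff_RTG.mpr h') hd
  rw [segReach_iff_RTG] at this
  rwa [add_comm c' d, add_comm d' d] at this

end CRN
namespace CRC

variable {k : ℕ} {C : CRC k}

lemma inputState_isState {x : Fin k → ℝ} (hx : ∀ i, 0 ≤ x i) :
    C.toCRN.IsState (C.inputState x) := by
  intro s
  refine Finset.sum_nonneg fun i _ => ?_
  split
  · exact hx i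
  · exact le_rfl

lemma inputState_add (x y : Fin k → ℝ) :
    C.inputState (x + y) = C.inputState x + C.inputState y := by
  funext s
  simp only [inputState, Pi.add_apply, ← Finset.sum_add_distrib]
  exact Finset.sum_congr rfl fun i _ => by split <;> simp

lemma inputState_smul (t : ℝ) (x : Fin k → ℝ) :
    C.inputState (t • x) = t • C.inputState x := by
  funext s
  simp only [inputState, Pi.smul_apply, smul_eq_mul, Finset.mul_sum]
  exact Finset.sum_congr rfl fun i _ => by split <;> simp

lemma inputState_zero : C.inputState (0 : Fin k → ℝ) = 0 := by
  funext s
  simp [inputState]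

end CRC
/-- If `f` is stably computed by a CRC and `Ω` is an output stable siphon,
then `f` is linear on the inputs whose associated initial states lie in
`Σ(Ω)`, i.e. from which `Ω` can be drained. -/
theorem linear_on_siphon_drainable_inputs
    {k : ℕ} (C : CRC k) (f : (Fin k → ℝ) → ℝ) (hcomp : C.stablyComputes f)
    (Ω : Set (Fin C.nS)) (hΩ : C.toCRN.IsSiphon Ω)
    (hΩstable : ∀ c : Fin C.nS → ℝ, C.toCRN.IsState c →
      (∀ s ∈ Ω, c s = 0) → C.outputStable c) :
    ∃ a : Fin k → ℝ, ∀ x : Fin k → ℝ, (∀ i, 0 ≤ x i) →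
      (∃ o : Fin C.nS → ℝ, C.toCRN.segReach (C.inputState x) o ∧
        ∀ s ∈ Ω, o s = 0) →
      f x = ∑ i, a i * x i := by
  classical
  -- the set of "good" inputs
  set D : Set (Fin k → ℝ) :=
    {x | (∀ i, 0 ≤ x i) ∧ ∃ o, C.toCRN.segReach (C.inputState x) o ∧ ∀ s ∈ Ω, o s = 0}
    with hDdef
  -- the value of `f` on a good input is the output concentration of any drained
  -- reachable state
  have hval : ∀ x : Fin k → ℝ, (∀ i, 0 ≤ x i) → ∀ o,
      C.toCRN.segReach (C.inputState x) o → (∀ s ∈ Ω, o s = 0) → f x = o C.out := by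
    intro x hx o hro hdr
    have ho : C.toCRN.IsState o := CRN.segReach_isState hro (CRC.inputState_isState hx)
    have hos : C.outputStable o := hΩstable o ho hdr
    obtain ⟨o', h1, h2, h3⟩ := hcomp x hx o hro
    rw [← h3, hos o' h1]
  have hD0 : (0 : Fin k → ℝ) ∈ D ∧ f 0 = 0 := by
    have hr : C.toCRN.segReach (C.inputState (0 : Fin k → ℝ)) 0 := by
      rw [CRC.inputState_zero]
      exact ⟨0, fun _ => 0, rfl, rfl, fun i => i.elim0⟩
    refine ⟨⟨fun i => le_rfl, 0, hr, fun s _ => rfl⟩, ?_⟩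
    have := hval 0 (fun i => le_rfl) 0 hr (fun s _ => rfl)
    simpa using this
  have hadd : ∀ x ∈ D, ∀ y ∈ D, x + y ∈ D ∧ f (x + y) = f x + f y := by
    rintro x ⟨hx, o, hro, hdr⟩ y ⟨hy, o', hro', hdr'⟩
    have hxy : ∀ i, 0 ≤ (x + y) i := fun i => add_nonneg (hx i) (hy i)
    have hr : C.toCRN.segReach (C.inputState (x + y)) (o + o') := by
      rw [CRC.inputState_add]
      exact CRN.segReach_add_both hro hro' (CRC.inputState_isState hy)
        (CRN.segReach_isState hro (CRC.inputState_isState hx))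
    have hdr'' : ∀ s ∈ Ω, (o + o') s = 0 := fun s hs => by
      simp [hdr s hs, hdr' s hs]
    refine ⟨⟨hxy, o + o', hr, hdr''⟩, ?_⟩
    rw [hval (x + y) hxy (o + o') hr hdr'', hval x hx o hro hdr, hval y hy o' hro' hdr']
    simp
  have hsmul : ∀ x ∈ D, ∀ t : ℝ, 0 ≤ t → t • x ∈ D ∧ f (t • x) = t * f x := by
    rintro x ⟨hx, o, hro, hdr⟩ t ht
    have htx : ∀ i, 0 ≤ (t • x) i := fun i => mul_nonneg ht (hx i)
    have hr : C.toCRN.segReach (C.inputState (t • x)) (t • o) := by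
      rw [CRC.inputState_smul]
      exact CRN.segReach_smul ht hro
    have hdr'' : ∀ s ∈ Ω, (t • o) s = 0 := fun s hs => by simp [hdr s hs]
    refine ⟨⟨htx, t • o, hr, hdr''⟩, ?_⟩
    rw [hval (t • x) htx (t • o) hr hdr'', hval x hx o hro hdr]
    simp
  -- nonnegative combinations of good inputs are good, and f is "linear" on them
  have hcombo : ∀ (ι : Type) (s : Finset ι) (c : ι → ℝ) (v : ι → Fin k → ℝ),
      (∀ i ∈ s, 0 ≤ c i) → (∀ i ∈ s, v i ∈ D) →
      (∑ i ∈ s, c i • v i) ∈ D ∧ f (∑ i ∈ s, c i • v i) = ∑ i ∈ s, c i * f (v i) := by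
    intro ι s
    induction s using Finset.induction with
    | empty => intro c v _ _; simpa using hD0
    | @insert a s ha ih =>
      intro c v hc hv
      have h1 := hsmul (v a) (hv a (Finset.mem_insert_self a s)) (c a)
        (hc a (Finset.mem_insert_self a s))
      have h2 := ih c v (fun i hi => hc i (Finset.mem_insert_of_mem hi))
        (fun i hi => hv i (Finset.mem_insert_of_mem hi))
      have h3 := hadd _ h1.1 _ h2.1
      rw [Finset.sum_insert ha, Finset.sum_insert ha]
      exact ⟨h3.1, by rw [h3.2, h1.2, h2.2]⟩
  -- extract a linearly independent spanning subset of D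
  obtain ⟨b, hbD, hbspan, hbind⟩ := exists_linearIndependent ℝ D
  let B : Module.Basis b ℝ (Submodule.span ℝ b) :=
    (Module.Basis.span hbind).map (LinearEquiv.ofEq _ _ (by rw [Subtype.range_val]))
  have hBv : ∀ v : b, ((B v : Submodule.span ℝ b) : Fin k → ℝ) = v := fun v => by
    simp only [B, Module.Basis.map_apply, LinearEquiv.coe_ofEq_apply, Module.Basis.span_apply]
  let φ : Submodule.span ℝ b →ₗ[ℝ] ℝ := B.constr ℝ fun v => f v.1
  obtain ⟨g, hg⟩ := φ.exists_extend
  refine ⟨fun i => g fun j => if i = j then 1 else 0, ?_⟩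
  intro x hx hex
  have hxD : x ∈ D := ⟨hx, hex⟩
  have hxs : x ∈ Submodule.span ℝ b := hbspan ▸ Submodule.subset_span hxD
  set ℓ : b →₀ ℝ := B.repr ⟨x, hxs⟩ with hℓ
  -- x is the combination of b given by ℓ
  have hrep : x = ∑ v ∈ ℓ.support, ℓ v • (v : Fin k → ℝ) := by
    have h1 := B.linearCombination_repr ⟨x, hxs⟩
    have h2 := congrArg (Subtype.val) h1
    rw [Finsupp.linearCombination_apply, Finsupp.sum] at h2
    have h2' : ((∑ v ∈ ℓ.support, ℓ v • B v : Submodule.span ℝ b) : Fin k → ℝ) = x := h2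
    rw [← h2']
    push_cast
    exact Finset.sum_congr rfl fun v _ => by rw [hBv]
  -- split into positive and negative coefficients
  set P : Finset b := ℓ.support.filter (fun v => 0 ≤ ℓ v) with hP
  set Nn : Finset b := ℓ.support.filter (fun v => ¬ 0 ≤ ℓ v) with hNn
  have hsplit : x + ∑ v ∈ Nn, (-ℓ v) • (v : Fin k → ℝ)
      = ∑ v ∈ P, ℓ v • (v : Fin k → ℝ) := by
    rw [hrep, ← Finset.sum_filter_add_sum_filter_not ℓ.support (fun v => 0 ≤ ℓ v)
      (fun v => ℓ v • (v : Fin k → ℝ))]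
    simp only [neg_smul, Finset.sum_neg_distrib]
    abel
  have hNmem : ∀ v ∈ Nn, ((v : Fin k → ℝ)) ∈ D := fun v _ => hbD v.2
  have hPmem : ∀ v ∈ P, ((v : Fin k → ℝ)) ∈ D := fun v _ => hbD v.2
  have hNpos : ∀ v ∈ Nn, 0 ≤ -ℓ v := fun v hv => by
    have := (Finset.mem_filter.mp hv).2
    linarith [lt_of_not_ge this]
  have hPpos : ∀ v ∈ P, 0 ≤ ℓ v := fun v hv => (Finset.mem_filter.mp hv).2
  have hA := hcombo b Nn (fun v => -ℓ v) (fun v => (v : Fin k → ℝ)) hNpos hNmem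
  have hB := hcombo b P (fun v => ℓ v) (fun v => (v : Fin k → ℝ)) hPpos hPmem
  have hfx : f x = ∑ v ∈ ℓ.support, ℓ v * f v := by
    have h4 := (hadd x hxD _ hA.1).2
    rw [hsplit, hB.2] at h4
    rw [← Finset.sum_filter_add_sum_filter_not ℓ.support (fun v => 0 ≤ ℓ v)
      (fun v => ℓ v * f v), ← hP, ← hNn]
    have : ∑ v ∈ Nn, ℓ v * f ↑v = - ∑ v ∈ Nn, (-ℓ v) * f ↑v := by
      simp [Finset.sum_neg_distrib]
    rw [this]
    rw [hA.2] at h4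
    linarith
  -- identify with the linear extension
  have hφ : φ ⟨x, hxs⟩ = ∑ v ∈ ℓ.support, ℓ v * f v := by
    rw [Module.Basis.constr_apply, ← hℓ, Finsupp.sum]
    exact Finset.sum_congr rfl fun v _ => rfl
  have hgx : g x = f x := by
    have := congrFun (congrArg (fun (h : _ →ₗ[ℝ] ℝ) => (h : _ → ℝ)) hg) ⟨x, hxs⟩
    simp only [LinearMap.comp_apply, Submodule.subtype_apply] at this
    rw [show g x = φ ⟨x, hxs⟩ from this, hφ, hfx]
  rw [← hgx, LinearMap.pi_apply_eq_sum_univ g x]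
  exact Finset.sum_congr rfl fun i _ => by rw [smul_eq_mul, mul_comm]
end

section
/- For any CRN, let Ω ⊆ Λ be a siphon and let a_1, a_2, … ∈ X(Ω) be a convergent sequence of states with limit a = lim_{i→∞} a_i. If every species is present in a, i.e., [a] = Λ, then a ∈ X(Ω). -/
open Finset Filter Topology

section ConeClosed

variable {E : Type*} [NormedAddCommGroup E] [NormedSpace ℝ E]
variable {ι : Type*} [Fintype ι]

theorem cone_caratheodory (v : ι → E) (T : Finset ι) :
    ∀ (u : ι → ℝ), (∀ i ∈ T, 0 ≤ u i) →
      ∃ T' : Finset ι, T' ⊆ T ∧ LinearIndependent ℝ (fun i : {a // a ∈ T'} => v i.1) ∧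
        ∃ w : ι → ℝ, (∀ i, 0 ≤ w i) ∧ ∑ i ∈ T', w i • v i = ∑ i ∈ T, u i • v i := by
  classical
  induction T using Finset.strongInduction with
  | _ T ih =>
    intro u hu
    by_cases hind : LinearIndependent ℝ (fun i : {a // a ∈ T} => v i.1)
    · refine ⟨T, le_refl _, hind, fun i => if i ∈ T then u i else 0, ?_, ?_⟩
      · intro i
        by_cases h : i ∈ T <;> simp [h] ; exact hu i h
      · apply Finset.sum_congr rfl
        intro i hi; simp [hi]
    · have hdep : ¬ LinearIndependent ℝ (v ∘ (↑) : ((T : Set ι)) → E) := fun h => hind h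
      obtain ⟨f, hsupp, hsum, hne⟩ := linearDepOn_iff.mp hdep
      have hsuppT : ∀ i, i ∉ T → f i = 0 := by
        intro i hi
        by_contra h
        exact hi (by exact_mod_cast hsupp (Finsupp.mem_support_iff.mpr h))
      have hsumT : ∑ i ∈ T, (f : ι → ℝ) i • v i = 0 := by
        rw [← hsum]
        symm
        apply Finset.sum_subset
        · intro i hi
          by_contra h
          exact (Finsupp.mem_support_iff.mp hi) (hsuppT i h)
        · intro i _ hi
          simp [Finsupp.notMem_support_iff.mp hi]
      obtain ⟨j, hj⟩ := Finsupp.ne_iff.mp hne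
      simp only [Finsupp.coe_zero, Pi.zero_apply] at hj
      have hjT : j ∈ T := by by_contra h; exact hj (hsuppT j h)
      -- choose d with a positive entry in T
      obtain ⟨d, hdT, hdsum, j', hj'T, hj'pos⟩ :
          ∃ d : ι → ℝ, (∀ i, i ∉ T → d i = 0) ∧ (∑ i ∈ T, d i • v i = 0) ∧
            ∃ j' ∈ T, 0 < d j' := by
        rcases lt_or_gt_of_ne hj with hneg | hpos
        · refine ⟨fun i => -(f i), fun i hi => by simp [hsuppT i hi], ?_, j, hjT, by simpa using neg_pos.mpr hneg⟩
          simp only [neg_smul, Finset.sum_neg_distrib]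
          rw [hsumT]; simp
        · exact ⟨f, hsuppT, hsumT, j, hjT, hpos⟩
      set P := T.filter (fun i => 0 < d i) with hP
      have hPne : P.Nonempty := ⟨j', Finset.mem_filter.mpr ⟨hj'T, hj'pos⟩⟩
      obtain ⟨i0, hi0P, hmin⟩ := P.exists_min_image (fun i => u i / d i) hPne
      have hi0T : i0 ∈ T := (Finset.mem_filter.mp hi0P).1
      have hdi0 : 0 < d i0 := (Finset.mem_filter.mp hi0P).2
      set t := u i0 / d i0 with ht
      have ht0 : 0 ≤ t := div_nonneg (hu i0 hi0T) hdi0.le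
      set w : ι → ℝ := fun i => u i - t * d i with hwdef
      have hw : ∀ i ∈ T, 0 ≤ w i := by
        intro i hiT
        by_cases hdi : 0 < d i
        · have : t ≤ u i / d i := hmin i (Finset.mem_filter.mpr ⟨hiT, hdi⟩)
          have := (le_div_iff₀ hdi).mp this
          simp only [hwdef]; linarith
        · push_neg at hdi
          have : t * d i ≤ 0 := mul_nonpos_of_nonneg_of_nonpos ht0 hdi
          have := hu i hiT
          simp only [hwdef]; linarith
      have hwi0 : w i0 = 0 := by
        simp only [hwdef, ht]
        field_simp
        ring
      have hsum_eq : ∑ i ∈ T.erase i0, w i • v i = ∑ i ∈ T, u i • v i := by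
        rw [Finset.sum_erase _ (by rw [hwi0]; simp)]
        simp only [hwdef, sub_smul, mul_smul, Finset.sum_sub_distrib]
        rw [← Finset.smul_sum, hdsum]
        simp
      obtain ⟨T', hT'sub, hT'ind, w', hw', hw'sum⟩ :=
        ih (T.erase i0) (Finset.erase_ssubset hi0T) w (fun i hi => hw i (Finset.mem_of_mem_erase hi))
      exact ⟨T', hT'sub.trans (Finset.erase_subset _ _), hT'ind, w', hw', by rw [hw'sum, hsum_eq]⟩

theorem isClosed_cone (v : ι → E) :
    IsClosed {x : E | ∃ u : ι → ℝ, (∀ i, 0 ≤ u i) ∧ x = ∑ i, u i • v i} := by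
  classical
  have key : {x : E | ∃ u : ι → ℝ, (∀ i, 0 ≤ u i) ∧ x = ∑ i, u i • v i} =
      ⋃ T ∈ {T : Finset ι | LinearIndependent ℝ (fun i : {a // a ∈ T} => v i.1)},
        {x : E | ∃ u : ι → ℝ, (∀ i, 0 ≤ u i) ∧ x = ∑ i ∈ T, u i • v i} := by
    ext x
    simp only [Set.mem_setOf_eq, Set.mem_iUnion]
    constructor
    · rintro ⟨u, hu, rfl⟩
      obtain ⟨T', _, hind, w, hw, hwsum⟩ := cone_caratheodory v Finset.univ u (fun i _ => hu i)
      exact ⟨T', hind, w, hw, hwsum.symm⟩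
    · rintro ⟨T, _, u, hu, rfl⟩
      refine ⟨fun i => if i ∈ T then u i else 0,
        fun i => by by_cases h : i ∈ T <;> simp [h, hu i], ?_⟩
      simp [ite_smul, Finset.sum_ite_mem]
  rw [key]
  apply Set.Finite.isClosed_biUnion (Set.toFinite _)
  intro T hT
  let L : ({a // a ∈ T} → ℝ) →ₗ[ℝ] E :=
    { toFun := fun q => ∑ i : {a // a ∈ T}, q i • v i.1,
      map_add' := fun a b => by simp [add_smul, Finset.sum_add_distrib],
      map_smul' := fun c a => by simp [smul_smul, Finset.smul_sum] }
  have hker : LinearMap.ker L = ⊥ := by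
    rw [LinearMap.ker_eq_bot']
    intro q hq
    funext i
    exact Fintype.linearIndependent_iff.mp hT q hq i
  have himg : {x : E | ∃ u : ι → ℝ, (∀ i, 0 ≤ u i) ∧ x = ∑ i ∈ T, u i • v i} =
      L '' {q | ∀ i, 0 ≤ q i} := by
    ext x
    constructor
    · rintro ⟨u, hu, rfl⟩
      refine ⟨fun i => u i.1, fun i => hu i.1, ?_⟩
      show ∑ i : {a // a ∈ T}, u i.1 • v i.1 = _
      rw [Finset.sum_coe_sort T (fun i => u i • v i)]
    · rintro ⟨q, hq, rfl⟩
      refine ⟨fun i => if h : i ∈ T then q ⟨i, h⟩ else 0,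
        fun i => by by_cases h : i ∈ T <;> simp [h] <;> exact hq _, ?_⟩
      show _ = ∑ i ∈ T, (if h : i ∈ T then q ⟨i, h⟩ else 0) • v i
      rw [← Finset.sum_coe_sort T (fun i => (if h : i ∈ T then q ⟨i, h⟩ else 0) • v i)]
      apply Finset.sum_congr rfl
      intro i _
      rw [dif_pos i.2]
  rw [himg]
  refine (LinearMap.isClosedEmbedding_of_injective hker).isClosedMap _ ?_
  have : {q : {a // a ∈ T} → ℝ | ∀ i, 0 ≤ q i} = ⋂ i, {q | 0 ≤ q i} := by
    ext q; simp [Set.mem_iInter]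
  rw [this]
  exact isClosed_iInter fun i => isClosed_le continuous_const (continuous_apply i)

end ConeClosed


namespace CRN

/-- `X(Ω)`: the set of states from which the siphon `Ω` can be drained via a
single straight-line segment. -/
def drainableOneSeg (N : CRN) (Ω : Set (Fin N.nS)) : Set (Fin N.nS → ℝ) :=
  {x | ∃ o : Fin N.nS → ℝ, N.slReach x o ∧ ∀ s ∈ Ω, o s = 0}

end CRN

/-- If a convergent sequence of states lies in `X(Ω)` and every species is
present in the limit `a`, then `a ∈ X(Ω)`. -/
theorem mem_drainableOneSeg_of_tendsto
    (N : CRN) (Ω : Set (Fin N.nS)) (hΩ : N.IsSiphon Ω)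
    (a : ℕ → Fin N.nS → ℝ) (ha : ∀ i, a i ∈ N.drainableOneSeg Ω)
    (lim : Fin N.nS → ℝ) (hlim : Filter.Tendsto a Filter.atTop (nhds lim))
    (hall : N.present lim = Set.univ) :
    lim ∈ N.drainableOneSeg Ω := by
  classical
  haveI : Fintype {s : Fin N.nS // s ∉ Ω} := Fintype.ofFinite _
  set gens : ({s : Fin N.nS // s ∉ Ω} ⊕ Fin N.nR) → (Fin N.nS → ℝ) :=
    Sum.elim (fun s => Pi.single s.1 (1 : ℝ)) (fun α => fun t => -(N.stoich t α)) with hgens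
  have hpos : ∀ s, 0 < lim s := fun s => by
    have : s ∈ N.present lim := by rw [hall]; trivial
    exact this
  have heval : ∀ (w : ({s : Fin N.nS // s ∉ Ω} ⊕ Fin N.nR) → ℝ) (s : Fin N.nS),
      (∑ i, w i • gens i) s
        = (∑ t : {s : Fin N.nS // s ∉ Ω}, w (Sum.inl t) * (Pi.single t.1 (1 : ℝ) : Fin N.nS → ℝ) s)
          - ∑ α, w (Sum.inr α) * N.stoich s α := by
    intro w s
    simp [hgens, Fintype.sum_sum_type, Finset.sum_apply, mul_neg,
      Finset.sum_neg_distrib, sub_eq_add_neg]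
  set Scone : Set (Fin N.nS → ℝ) :=
    {x | ∃ w : ({s : Fin N.nS // s ∉ Ω} ⊕ Fin N.nR) → ℝ,
      (∀ i, 0 ≤ w i) ∧ x = ∑ i, w i • gens i} with hScone
  have hclosed : IsClosed Scone := isClosed_cone gens
  have hmem : ∀ n, a n ∈ Scone := by
    intro n
    obtain ⟨o, ⟨_, hso, u, hu0, _, hsum⟩, hoΩ⟩ := ha n
    refine ⟨Sum.elim (fun t => o t.1) u, ?_, ?_⟩
    · rintro (t | α)
      · exact hso t.1
      · exact hu0 α
    · funext s
      rw [heval]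
      simp only [Sum.elim_inl, Sum.elim_inr]
      have hkey : ∑ t : {s : Fin N.nS // s ∉ Ω}, o t.1 * (Pi.single t.1 (1 : ℝ) : Fin N.nS → ℝ) s = o s := by
        by_cases hs : s ∈ Ω
        · rw [hoΩ s hs]
          apply Finset.sum_eq_zero
          intro t _
          rw [Pi.single_apply, if_neg (by rintro rfl; exact t.2 hs), mul_zero]
        · rw [Fintype.sum_eq_single (⟨s, hs⟩ : {s : Fin N.nS // s ∉ Ω})]
          · simp [Pi.single_apply]
          · intro t ht
            rw [Pi.single_apply, if_neg, mul_zero]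
            intro h
            exact ht (Subtype.ext h.symm)
      rw [hkey, hsum s]
      ring
  have hlimmem : lim ∈ Scone := hclosed.mem_of_tendsto hlim (Filter.Eventually.of_forall hmem)
  obtain ⟨w, hw, hwsum⟩ := hlimmem
  set u : Fin N.nR → ℝ := fun α => w (Sum.inr α) with hu
  set o : Fin N.nS → ℝ := fun s => lim s + ∑ α, u α * N.stoich s α with hodef
  have ho : ∀ s, o s = ∑ t : {s : Fin N.nS // s ∉ Ω},
      w (Sum.inl t) * (Pi.single t.1 (1 : ℝ) : Fin N.nS → ℝ) s := by
    intro s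
    have h2 := congrFun hwsum s
    rw [heval] at h2
    simp only [hodef, hu]
    linarith [h2]
  have honn : ∀ s, 0 ≤ o s := by
    intro s
    rw [ho s]
    apply Finset.sum_nonneg
    intro t _
    apply mul_nonneg (hw _)
    rw [Pi.single_apply]
    split <;> norm_num
  have hoΩ : ∀ s ∈ Ω, o s = 0 := by
    intro s hs
    rw [ho s]
    apply Finset.sum_eq_zero
    intro t _
    rw [Pi.single_apply, if_neg (by rintro rfl; exact t.2 hs), mul_zero]
  exact ⟨o, ⟨fun s => (hpos s).le, honn, u, fun α => hw _,
    fun α _ s _ => hpos s, fun s => rfl⟩, hoΩ⟩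
end

section
/- Let D ⊆ ℝ^k be convex and let f : D → ℝ be a continuous function such that there exist affine functions g_1,…,g_p : ℝ^k → ℝ with the property that for every x ∈ D there exists j with f(x) = g_j(x). Then there exist nonempty subsets S_1,…,S_q ⊆ {1,…,p} such that for all x ∈ D, f(x) = max_{1≤i≤q} min_{j∈S_i} g_j(x). -/
open Finset

section Aux
open Set Filter Topology

lemma affine_seg {k : ℕ} (g : (Fin k → ℝ) → ℝ)
    (hg : ∃ (a : Fin k → ℝ) (b : ℝ), ∀ x, g x = (∑ i, a i * x i) + b)
    (x y : Fin k → ℝ) (t : ℝ) :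
    g ((1 - t) • x + t • y) = (1 - t) * g x + t * g y := by
  obtain ⟨a, b, hab⟩ := hg
  rw [hab, hab, hab]
  have : ∀ i ∈ Finset.univ, a i * ((1 - t) • x + t • y) i
      = (1 - t) * (a i * x i) + t * (a i * y i) := fun i _ => by
    simp [Pi.add_apply, Pi.smul_apply, smul_eq_mul]; ring
  rw [Finset.sum_congr rfl this, Finset.sum_add_distrib, ← Finset.mul_sum, ← Finset.mul_sum]
  ring

open Set Filter Topology

lemma oneDim {p : ℕ} (c d : Fin p → ℝ) (h : ℝ → ℝ)
    (hc : ContinuousOn h (Set.Icc 0 1))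
    (hcov : ∀ t ∈ Set.Icc (0:ℝ) 1, ∃ j, h t = c j * t + d j) :
    ∃ j, h 0 ≤ d j ∧ c j + d j ≤ h 1 := by
  classical
  set B : Set ℝ :=
    {t | t ∈ Set.Icc (0:ℝ) 1 ∧ ∃ j, h t ≤ c j * t + d j ∧ c j + d j ≤ h 1} with hBdef
  have h1B : (1:ℝ) ∈ B := by
    obtain ⟨j, hj⟩ := hcov 1 (by norm_num)
    exact ⟨by norm_num, j, by linarith [hj], by linarith [hj]⟩
  have hBclosed : IsClosed B := by
    have hrw : B = ⋃ j : Fin p,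
        if c j + d j ≤ h 1 then
          Set.Icc (0:ℝ) 1 ∩ (fun t => h t - (c j * t + d j)) ⁻¹' Set.Iic 0
        else ∅ := by
      ext t
      simp only [hBdef, Set.mem_setOf_eq, Set.mem_iUnion]
      constructor
      · rintro ⟨htI, j, hle, h1⟩
        exact ⟨j, by simp [h1, htI, Set.mem_preimage, sub_nonpos.mpr hle]⟩
      · rintro ⟨j, hj⟩
        by_cases h1 : c j + d j ≤ h 1
        · simp only [if_pos h1, Set.mem_inter_iff, Set.mem_preimage, Set.mem_Iic] at hj
          exact ⟨hj.1, j, by linarith [hj.2], h1⟩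
        · simp [if_neg h1] at hj
    rw [hrw]
    refine isClosed_iUnion_of_finite fun j => ?_
    by_cases h1 : c j + d j ≤ h 1
    · rw [if_pos h1]
      exact ContinuousOn.preimage_isClosed_of_isClosed
        (hc.sub (by fun_prop)) isClosed_Icc isClosed_Iic
    · simp [if_neg h1]
  have hBbdd : BddBelow B := ⟨0, fun t ht => ht.1.1⟩
  set t0 := sInf B with ht0def
  have ht0B : t0 ∈ B := hBclosed.csInf_mem ⟨1, h1B⟩ hBbdd
  obtain ⟨ht0I, j, hjt0, hj1⟩ := ht0B
  rcases eq_or_lt_of_le ht0I.1 with h0 | h0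
  · exact ⟨j, by simpa [← h0] using hjt0, hj1⟩
  exfalso
  -- kind-2 indices: those strictly above h at t0 and strictly above h 1 at 1
  have hK : ∀ᶠ t in 𝓝[Set.Icc (0:ℝ) 1] t0,
      ∀ j' : Fin p, h 1 < c j' + d j' → h t0 < c j' * t0 + d j' →
        h t < c j' * t + d j' := by
    rw [Filter.eventually_all]
    intro j'
    by_cases hA : h 1 < c j' + d j'
    · by_cases hB2 : h t0 < c j' * t0 + d j'
      · have hcont : ContinuousWithinAt (fun t => c j' * t + d j' - h t)
            (Set.Icc (0:ℝ) 1) t0 := ((by fun_prop : Continuous fun t => c j' * t + d j').continuousWithinAt).sub (hc t0 ht0I)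
        have hpos : (0:ℝ) < c j' * t0 + d j' - h t0 := by linarith
        have := hcont.eventually_const_lt hpos
        filter_upwards [this] with t ht _ _
        linarith
      · filter_upwards with t _ hB2' ; exact absurd hB2' hB2
    · filter_upwards with t hA' _ ; exact absurd hA' hA
  have hmem : ∀ᶠ t in 𝓝[Set.Ico (0:ℝ) t0] t0, t ∈ Set.Ico (0:ℝ) t0 :=
    self_mem_nhdsWithin
  have hsub : Set.Ico (0:ℝ) t0 ⊆ Set.Icc 0 1 := fun t ht =>
    ⟨ht.1, le_trans (le_of_lt ht.2) ht0I.2⟩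
  have hKlo : ∀ᶠ t in 𝓝[Set.Ico (0:ℝ) t0] t0,
      ∀ j' : Fin p, h 1 < c j' + d j' → h t0 < c j' * t0 + d j' →
        h t < c j' * t + d j' := hK.filter_mono (nhdsWithin_mono _ hsub)
  have hne : (𝓝[Set.Ico (0:ℝ) t0] t0).NeBot := by
    rw [← mem_closure_iff_nhdsWithin_neBot, closure_Ico (ne_of_lt h0)]
    exact ⟨le_of_lt h0, le_refl _⟩
  obtain ⟨t, htIco, htK⟩ := (hmem.and hKlo).exists
  have htnB : t ∉ B := fun htB => absurd (csInf_le hBbdd htB) (not_le.mpr htIco.2)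
  obtain ⟨j'', hj''⟩ := hcov t (hsub htIco)
  by_cases h1'' : c j'' + d j'' ≤ h 1
  · exact htnB ⟨hsub htIco, j'', le_of_eq hj'', h1''⟩
  push_neg at h1''
  by_cases ht0'' : h t0 < c j'' * t0 + d j''
  · exact absurd (hj'' ▸ htK j'' h1'' ht0'') (lt_irrefl _)
  push_neg at ht0''
  -- now slope argument
  have hE0 : c j'' * t0 + d j'' ≤ c j * t0 + d j := le_trans ht0'' hjt0
  have hE1 : c j + d j < c j'' + d j'' := lt_of_le_of_lt hj1 h1''
  have ht0lt1 : t0 < 1 := by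
    rcases lt_or_eq_of_le ht0I.2 with h | h
    · exact h
    · rw [h] at hE0; linarith
  have hu : 0 < c j'' - c j := by nlinarith
  have : c j'' * t + d j'' < c j * t + d j := by nlinarith [htIco.2]
  exact htnB ⟨hsub htIco, j, by linarith [hj''], hj1⟩

lemma keyLemma {k : ℕ} (D : Set (Fin k → ℝ)) (hD : Convex ℝ D)
    (f : (Fin k → ℝ) → ℝ) (hf : ContinuousOn f D)
    (p : ℕ) (g : Fin p → (Fin k → ℝ) → ℝ)
    (hg : ∀ j, ∃ (a : Fin k → ℝ) (b : ℝ), ∀ x, g j x = (∑ i, a i * x i) + b)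
    (hcover : ∀ x ∈ D, ∃ j, f x = g j x)
    {x y : Fin k → ℝ} (hx : x ∈ D) (hy : y ∈ D) :
    ∃ j, f x ≤ g j x ∧ g j y ≤ f y := by
  set z : ℝ → (Fin k → ℝ) := fun t => (1 - t) • x + t • y with hz
  have hzmem : ∀ t ∈ Set.Icc (0:ℝ) 1, z t ∈ D := fun t ht =>
    hD hx hy (by linarith [ht.2]) ht.1 (by ring)
  have hzcont : Continuous z := by fun_prop
  have hcomp : ContinuousOn (fun t => f (z t)) (Set.Icc 0 1) :=
    hf.comp hzcont.continuousOn hzmem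
  have hgz : ∀ j t, g j (z t) = (g j y - g j x) * t + g j x := fun j t => by
    rw [hz]; simp only
    rw [affine_seg (g j) (hg j) x y t]; ring
  have hcov1 : ∀ t ∈ Set.Icc (0:ℝ) 1, ∃ j,
      (fun t => f (z t)) t = (fun j => g j y - g j x) j * t + (fun j => g j x) j := by
    intro t ht
    obtain ⟨j, hj⟩ := hcover (z t) (hzmem t ht)
    exact ⟨j, by show f (z t) = _; rw [hj, hgz]⟩
  obtain ⟨j, hj0, hj1⟩ := oneDim (fun j => g j y - g j x) (fun j => g j x)
    (fun t => f (z t)) hcomp hcov1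
  have hz0 : z 0 = x := by simp [hz]
  have hz1 : z 1 = y := by simp [hz]
  refine ⟨j, ?_, ?_⟩
  · simpa [hz0] using hj0
  · have : g j y - g j x + g j x ≤ f (z 1) := hj1
    rw [hz1] at this; linarith

end Aux

/-- Max-min representation of continuous piecewise affine functions: if
`f : D → ℝ` is continuous on a convex set `D ⊆ ℝ^k` and piecewise affine with
affine components `g_1, …, g_p`, then there are nonempty subsets
`S_1, …, S_q ⊆ {1,…,p}` such that `f(x) = max_i min_{j ∈ S_i} g_j(x)` on `D`. -/
theorem continuous_piecewise_affine_max_min_representation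
    {k : ℕ} (D : Set (Fin k → ℝ)) (hD : Convex ℝ D)
    (f : (Fin k → ℝ) → ℝ) (hf : ContinuousOn f D)
    (p : ℕ) (g : Fin p → (Fin k → ℝ) → ℝ)
    (hg : ∀ j, ∃ (a : Fin k → ℝ) (b : ℝ), ∀ x, g j x = (∑ i, a i * x i) + b)
    (hcover : ∀ x ∈ D, ∃ j, f x = g j x) :
    ∃ (q : ℕ) (S : Fin q → Finset (Fin p)) (hS : ∀ i, (S i).Nonempty),
      ∀ x ∈ D, ∃ hq : (Finset.univ : Finset (Fin q)).Nonempty,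
        f x = Finset.univ.sup' hq fun i => (S i).inf' (hS i) fun j => g j x := by
  classical
  set Sx : (Fin k → ℝ) → Finset (Fin p) :=
    fun x => Finset.univ.filter (fun j => f x ≤ g j x) with hSx
  have hSxne : ∀ x ∈ D, (Sx x).Nonempty := by
    intro x hx
    obtain ⟨j, hj⟩ := hcover x hx
    exact ⟨j, by simp [hSx, hj.le]⟩
  set T : Finset (Finset (Fin p)) :=
    Finset.univ.powerset.filter (fun t => ∃ x ∈ D, t = Sx x) with hT
  set q := T.card with hq
  set S : Fin q → Finset (Fin p) := fun i => (T.equivFin.symm i : Finset (Fin p)) with hS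
  have hSmem : ∀ i, S i ∈ T := fun i => (T.equivFin.symm i).2
  have hSwit : ∀ i, ∃ x ∈ D, S i = Sx x := by
    intro i
    have := hSmem i
    rw [hT, Finset.mem_filter] at this
    exact this.2
  have hSne : ∀ i, (S i).Nonempty := by
    intro i
    obtain ⟨x, hx, hxe⟩ := hSwit i
    rw [hxe]; exact hSxne x hx
  refine ⟨q, S, hSne, ?_⟩
  intro x hx
  have hSxT : Sx x ∈ T := by
    rw [hT, Finset.mem_filter]
    exact ⟨Finset.mem_powerset.2 (Finset.filter_subset _ _), x, hx, rfl⟩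
  have hqpos : 0 < q := Finset.card_pos.2 ⟨Sx x, hSxT⟩
  have huniv : (Finset.univ : Finset (Fin q)).Nonempty := ⟨⟨0, hqpos⟩, Finset.mem_univ _⟩
  refine ⟨huniv, le_antisymm ?_ ?_⟩
  · -- f x ≤ sup' via index corresponding to Sx x
    set i0 : Fin q := T.equivFin ⟨Sx x, hSxT⟩ with hi0
    have hSi0 : S i0 = Sx x := by rw [hS]; simp [hi0]
    refine le_trans ?_ (Finset.le_sup' _ (Finset.mem_univ i0))
    apply Finset.le_inf'
    intro j hj
    rw [hSi0, hSx, Finset.mem_filter] at hj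
    exact hj.2
  · apply Finset.sup'_le
    intro i _
    obtain ⟨y, hy, hye⟩ := hSwit i
    obtain ⟨j, hjy, hjx⟩ := keyLemma D hD f hf p g hg hcover hy hx
    have hjmem : j ∈ S i := by rw [hye, hSx]; simp [hjy]
    exact le_trans (Finset.inf'_le _ hjmem) hjx
end

section
/- Let a ≤ b be real numbers, let f : [a,b] → ℝ be continuous, and let g_1,…,g_n : ℝ → ℝ be affine functions such that for every x ∈ [a,b] there exists i with f(x) = g_i(x). Then there exists k ∈ {1,…,n} such that g_k(a) ≤ f(a) and g_k(b) ≥ f(b). -/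
/-- If `f : [a,b] → ℝ` is continuous and piecewise affine with affine
components `g_1, …, g_n`, then some component `g_k` satisfies
`g_k(a) ≤ f(a)` and `g_k(b) ≥ f(b)`. -/
theorem exists_component_le_at_left_ge_at_right
    (a b : ℝ) (hab : a ≤ b) (f : ℝ → ℝ)
    (hf : ContinuousOn f (Set.Icc a b))
    (n : ℕ) (g : Fin n → ℝ → ℝ)
    (hg : ∀ i, ∃ m c : ℝ, ∀ x, g i x = m * x + c)
    (hcover : ∀ x ∈ Set.Icc a b, ∃ i, f x = g i x) :
    ∃ k : Fin n, g k a ≤ f a ∧ f b ≤ g k b := by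
  rcases eq_or_lt_of_le hab with rfl | hlt
  · obtain ⟨i, hi⟩ := hcover a (by simp)
    exact ⟨i, le_of_eq hi.symm, le_of_eq hi⟩
  by_contra hcon
  push_neg at hcon
  have hgc : ∀ k, Continuous (g k) := by
    intro k
    obtain ⟨m, cst, h⟩ := hg k
    have : g k = fun x => m * x + cst := funext h
    rw [this]; continuity
  set T : Set ℝ := {x | x ∈ Set.Icc a b ∧ ∃ k, g k a ≤ f a ∧ f x ≤ g k x} with hT
  have hTsub : T ⊆ Set.Icc a b := fun x hx => hx.1
  have hTclosed : IsClosed T := by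
    have hTeq : T = ⋃ k : Fin n, {x | x ∈ Set.Icc a b ∧ g k a ≤ f a ∧ f x ≤ g k x} := by
      ext x
      simp only [hT, Set.mem_setOf_eq, Set.mem_iUnion]
      tauto
    rw [hTeq]
    apply isClosed_iUnion_of_finite
    intro k
    by_cases hk : g k a ≤ f a
    · have heq : {x | x ∈ Set.Icc a b ∧ g k a ≤ f a ∧ f x ≤ g k x}
          = Set.Icc a b ∩ (fun x => f x - g k x) ⁻¹' Set.Iic 0 := by
        ext x
        simp [hk, sub_nonpos]
      rw [heq]
      exact (hf.sub (hgc k).continuousOn).preimage_isClosed_of_isClosed isClosed_Icc isClosed_Iic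
    · have : {x | x ∈ Set.Icc a b ∧ g k a ≤ f a ∧ f x ≤ g k x} = ∅ := by
        ext x; simp [hk]
      rw [this]; exact isClosed_empty
  have haT : a ∈ T := by
    obtain ⟨i, hi⟩ := hcover a ⟨le_refl a, hab⟩
    exact ⟨⟨le_refl a, hab⟩, i, le_of_eq hi.symm, le_of_eq hi⟩
  have hbdd : BddAbove T := BddAbove.mono hTsub (bddAbove_Icc)
  set c := sSup T with hc
  have hcT : c ∈ T := hTclosed.csSup_mem ⟨a, haT⟩ hbdd
  obtain ⟨hcIcc, k0, hk0a, hk0c⟩ := hcT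
  have hcb : c < b := by
    rcases lt_or_eq_of_le hcIcc.2 with h | h
    · exact h
    · exact absurd hk0c (by rw [h]; exact not_le.2 (hcon k0 hk0a))
  have hclaim : ∀ x, c < x → x ≤ b → ∀ k, g k a ≤ f a → g k x < f x := by
    intro x hcx hxb k hk
    by_contra h
    push_neg at h
    have hxT : x ∈ T := ⟨⟨le_trans hcIcc.1 (le_of_lt hcx), hxb⟩, k, hk, h⟩
    exact absurd (le_csSup hbdd hxT) (not_le.2 hcx)
  -- the sets F j
  set F : Fin n → Set ℝ := fun j => {x | x ∈ Set.Icc c b ∧ ¬ g j a ≤ f a ∧ f x = g j x} with hF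
  have hFclosed : ∀ j, IsClosed (F j) := by
    intro j
    by_cases hj : g j a ≤ f a
    · have : F j = ∅ := by ext x; simp [hF, hj]
      rw [this]; exact isClosed_empty
    · have hmono : Set.Icc c b ⊆ Set.Icc a b := Set.Icc_subset_Icc hcIcc.1 le_rfl
      have heq : F j = Set.Icc c b ∩ (fun x => f x - g j x) ⁻¹' ({0} : Set ℝ) := by
        ext x
        simp only [hF, Set.mem_setOf_eq, Set.mem_inter_iff, Set.mem_preimage,
          Set.mem_singleton_iff, sub_eq_zero]
        tauto
      rw [heq]
      exact ((hf.mono hmono).sub (hgc j).continuousOn).preimage_isClosed_of_isClosed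
        isClosed_Icc isClosed_singleton
  have hsub : Set.Ioc c b ⊆ ⋃ j, (Set.Ioc c b ∩ F j) := by
    intro x hx
    have hxIcc : x ∈ Set.Icc a b := ⟨le_trans hcIcc.1 (le_of_lt hx.1), hx.2⟩
    obtain ⟨j, hj⟩ := hcover x hxIcc
    have hja : ¬ g j a ≤ f a := by
      intro h
      exact absurd (hj ▸ hclaim x hx.1 hx.2 j h) (lt_irrefl _)
    exact Set.mem_iUnion.2 ⟨j, hx, ⟨le_of_lt hx.1, hx.2⟩, hja, hj⟩
  -- c is in the closure of the union
  have hcclos : c ∈ ⋃ j, closure (Set.Ioc c b ∩ F j) := by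
    have h1 : c ∈ closure (Set.Ioc c b) := by
      rw [closure_Ioc (ne_of_lt hcb)]
      exact ⟨le_rfl, le_of_lt hcb⟩
    have h2 : closure (Set.Ioc c b) ⊆ ⋃ j, closure (Set.Ioc c b ∩ F j) := by
      apply closure_minimal
      · exact fun x hx => Set.mem_iUnion.2
          (by obtain ⟨j, hj⟩ := Set.mem_iUnion.1 (hsub hx); exact ⟨j, subset_closure hj⟩)
      · exact isClosed_iUnion_of_finite (fun j => isClosed_closure)
    exact h2 h1
  obtain ⟨j, hjc⟩ := Set.mem_iUnion.1 hcclos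
  have hclosF : closure (Set.Ioc c b ∩ F j) ⊆ F j :=
    closure_minimal Set.inter_subset_right (hFclosed j)
  have hcFj : c ∈ F j := hclosF hjc
  obtain ⟨_, hja, hfc⟩ := hcFj
  -- a witness x' > c with f x' = g j x'
  have hne : (Set.Ioc c b ∩ F j).Nonempty := by
    by_contra h
    rw [Set.not_nonempty_iff_eq_empty] at h
    rw [h, closure_empty] at hjc
    exact hjc
  obtain ⟨x', hx'Ioc, _, _, hx'j⟩ := hne
  -- a < c
  have hac : a < c := by
    rcases lt_or_eq_of_le hcIcc.1 with h | h
    · exact h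
    · exact absurd (le_of_eq (h ▸ hfc).symm) hja
  -- unpack affineness and finish with arithmetic
  obtain ⟨mj, cj, hmj⟩ := hg j
  obtain ⟨m0, c0, hm0⟩ := hg k0
  have h1 : f a < mj * a + cj := by rw [← hmj a]; exact not_le.1 hja
  have h2 : m0 * a + c0 ≤ f a := by rw [← hm0 a]; exact hk0a
  have h3 : f c = mj * c + cj := by rw [← hmj c]; exact hfc
  have h4 : f c ≤ m0 * c + c0 := by rw [← hm0 c]; exact hk0c
  have h5 : f x' = mj * x' + cj := by rw [← hmj x']; exact hx'j
  have h6 : m0 * x' + c0 < f x' := by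
    rw [← hm0 x']; exact hclaim x' hx'Ioc.1 hx'Ioc.2 k0 hk0a
  have hcx' : c < x' := hx'Ioc.1
  nlinarith [mul_pos (sub_pos.2 (lt_of_le_of_lt h2 h1)) (sub_pos.2 hcx'),
    mul_nonpos_of_nonpos_of_nonneg (sub_nonpos.2 (h3 ▸ h4)) (sub_nonneg.2 (le_of_lt (lt_trans hac hcx'))),
    mul_pos (sub_pos.2 (lt_of_lt_of_le h6 (le_of_eq h5))) (sub_pos.2 hac)]
end
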